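/- For n ≥ k+1 and k ≥ 2, the girth of the Cayley graph T_kG_n generated by a k-tree on n vertices equals 4; moreover, if s, p, t form a triangle in G(𝒯), then for every vertex u the four vertices u, u·(s p), u·(s p)·(p t), u·(s t) form a 4-cycle in T_kG_n (a Type B 4-cycle). -/

import Mathlib

/-!
Every generator is a transposition, so right multiplication by a generator flips the sign:
the sign is a proper 2-colouring of `T_kG_n`, which therefore has only even cycles and girth at
least `4`. Conversely, for a triangle `s p t` of `G(𝒯)` the identity
`(s p)(p t)(s p) = (s t)` closes the walk `u, u(sp), u(sp)(pt), u(sp)(pt)(sp) = u(st), u`,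
and a `k`-tree with `k ≥ 2` contains a triangle, namely its first three vertices.
-/

/-- The transposition generating graph `G(𝒯)` of a set `T` of transpositions of `Sym(n)`:
vertices `{1,…,n}` (modeled as `Fin n`), with an edge `i j` iff the transposition
`(i j)` belongs to `T`. -/
def transGraph {n : ℕ} (T : Set (Equiv.Perm (Fin n))) : SimpleGraph (Fin n) :=
  SimpleGraph.fromRel (fun i j => Equiv.swap i j ∈ T)

/-- The Cayley graph `Cay(Sym(n), T)`: vertices are permutations, and `g, h` are
adjacent iff `h = g * t` for some `t ∈ T`. -/
def cayley {n : ℕ} (T : Set (Equiv.Perm (Fin n))) : SimpleGraph (Equiv.Perm (Fin n)) :=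
  SimpleGraph.fromRel (fun g h => ∃ t ∈ T, h = g * t)

/-- `G` is a `k`-tree: there is a construction ordering of the vertices in which the
first `k+1` vertices are mutually adjacent, and each later vertex is joined to exactly
`k` mutually adjacent earlier vertices. -/
def IsKTree (k : ℕ) {V : Type*} [Fintype V] (G : SimpleGraph V) : Prop :=
  k + 1 ≤ Fintype.card V ∧
  ∃ e : Fin (Fintype.card V) ≃ V,
    (∀ i j : Fin (Fintype.card V), j < i → (i : ℕ) ≤ k → G.Adj (e i) (e j)) ∧
    ∀ i : Fin (Fintype.card V), k + 1 ≤ (i : ℕ) →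
      {j : Fin (Fintype.card V) | j < i ∧ G.Adj (e i) (e j)}.ncard = k ∧
      {j : Fin (Fintype.card V) | j < i ∧ G.Adj (e i) (e j)}.Pairwise
        (fun j₁ j₂ => G.Adj (e j₁) (e j₂))

/-- `F` is an `R_k`-vertex-cut of `G`: `G - F` is disconnected and every vertex of
`G - F` has at least `k` neighbors in `G - F`. -/
def IsRkCut {V : Type*} (G : SimpleGraph V) (k : ℕ) (F : Set V) : Prop :=
  ¬ (G.induce (Fᶜ : Set V)).Connected ∧
  ∀ v : V, v ∉ F → k ≤ {u : V | u ∉ F ∧ G.Adj v u}.ncard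

/-- The `R_k`-vertex-connectivity `κ^k(G)`: the minimum cardinality of an
`R_k`-vertex-cut of `G`. -/
noncomputable def rkConn {V : Type*} (G : SimpleGraph V) (k : ℕ) : ℕ :=
  sInf {m : ℕ | ∃ F : Set V, IsRkCut G k F ∧ F.ncard = m}

open Equiv

namespace SimpleGraph

variable {V : Type*} {G : SimpleGraph V}

lemma IsBipartite.four_le_egirth (hG : G.IsBipartite) : 4 ≤ G.egirth := by
  obtain ⟨c⟩ := hG
  refine le_egirth.mpr fun a w hw => ?_
  obtain ⟨r, hr⟩ : Even w.length :=
    ((recolorOfEquiv G finTwoEquiv c).even_length_iff_congr w).mpr Iff.rfl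
  have := hw.three_le_length
  exact_mod_cast (by omega : 4 ≤ w.length)

lemma egirth_le_four {a b c d : V} (hab : G.Adj a b) (hbc : G.Adj b c) (hcd : G.Adj c d)
    (hda : G.Adj d a) (hac : a ≠ c) (hbd : b ≠ d) : G.egirth ≤ 4 := by
  have hw : (Walk.cons hab (.cons hbc (.cons hcd (.cons hda .nil)))).IsCycle :=
    { edges_nodup := by aesop
      ne_nil := by aesop
      support_nodup := by aesop }
  exact egirth_le_length hw

lemma IsBipartite.girth_eq_four (hG : G.IsBipartite) {a b c d : V} (hab : G.Adj a b)
    (hbc : G.Adj b c) (hcd : G.Adj c d) (hda : G.Adj d a) (hac : a ≠ c) (hbd : b ≠ d) :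
    G.girth = 4 := by
  rw [girth, le_antisymm (egirth_le_four hab hbc hcd hda hac hbd) hG.four_le_egirth]
  rfl

end SimpleGraph

lemma IsKTree.exists_triangle {k : ℕ} {V : Type*} [Fintype V] {G : SimpleGraph V}
    (hk : 2 ≤ k) (hG : IsKTree k G) : ∃ a b c, G.Adj a b ∧ G.Adj b c ∧ G.Adj a c := by
  obtain ⟨hcard, e, hclique, -⟩ := hG
  have adj : ∀ i j : ℕ, (hj : j < i) → (hi : i ≤ 2) →
      G.Adj (e ⟨i, by omega⟩) (e ⟨j, by omega⟩) :=
    fun i j hj hi => hclique _ _ hj (by simp only; omega)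
  exact ⟨_, _, _, adj 2 1 (by omega) le_rfl, adj 1 0 (by omega) (by omega),
    adj 2 0 (by omega) le_rfl⟩

lemma pairwise_ne_swap_square {α : Type*} [DecidableEq α] {s p t : α} (hsp : s ≠ p)
    (hpt : p ≠ t) (hst : s ≠ t) (u : Perm α) :
    [u, u * swap s p, u * swap s p * swap p t, u * swap s t].Pairwise (· ≠ ·) := by
  have hmap : [u, u * swap s p, u * swap s p * swap p t, u * swap s t] =
      [1, swap s p, swap s p * swap p t, swap s t].map (u * ·) := by
    simp [mul_assoc]
  rw [hmap, List.pairwise_map]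
  refine List.Pairwise.imp (mul_right_injective u).ne ?_
  simp only [List.pairwise_cons, List.mem_cons, List.not_mem_nil, or_false, forall_eq_or_imp,
    forall_eq, List.Pairwise.nil, and_true, IsEmpty.forall_iff, implies_true]
  -- `swap s p` and `swap s p * swap p t` differ at `t`; every other pair already differs at `s`.
  have ne_at (x : α) {f g : Perm α} (h : f x ≠ g x) : f ≠ g := fun e => h (by rw [e])
  refine ⟨⟨ne_at s ?_, ne_at s ?_, ne_at s ?_⟩, ⟨ne_at t ?_, ne_at s ?_⟩, ne_at s ?_⟩ <;>
    simp [swap_apply_of_ne_of_ne, *, Ne.symm]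

section Cayley

variable {n : ℕ} {T : Set (Perm (Fin n))}

@[simp]
lemma transGraph_adj {s p : Fin n} : (transGraph T).Adj s p ↔ s ≠ p ∧ swap s p ∈ T := by
  rw [transGraph, SimpleGraph.fromRel_adj, swap_comm p s, or_self]

lemma cayley_adj_mul_swap {s p : Fin n} (h : (transGraph T).Adj s p) (u : Perm (Fin n)) :
    (cayley T).Adj u (u * swap s p) := by
  rw [transGraph_adj] at h
  rw [cayley, SimpleGraph.fromRel_adj]
  exact ⟨by simpa [eq_comm] using h.1, Or.inl ⟨_, h.2, rfl⟩⟩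

lemma cayley_isBipartite (hT : ∀ t ∈ T, t.IsSwap) : (cayley T).IsBipartite := by
  have sign_mul : ∀ g t, t ∈ T → Perm.sign (g * t) = -Perm.sign g := fun g t ht => by
    rw [Perm.sign_mul, (hT t ht).sign_eq, mul_neg_one]
  let c : (cayley T).Coloring ℤˣ := SimpleGraph.Coloring.mk Perm.sign fun {g h} hgh => by
    rw [cayley, SimpleGraph.fromRel_adj] at hgh
    obtain ⟨-, ⟨t, ht, rfl⟩ | ⟨t, ht, rfl⟩⟩ := hgh
    · rw [sign_mul g t ht]; exact units_ne_neg_self _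
    · rw [sign_mul h t ht]; exact neg_units_ne_self _
  exact c.colorable

lemma cayley_typeB_cycle {s p t : Fin n}
    (hsp : (transGraph T).Adj s p) (hpt : (transGraph T).Adj p t)
    (hst : (transGraph T).Adj s t) (u : Perm (Fin n)) :
    [u, u * swap s p, u * swap s p * swap p t, u * swap s t].Pairwise (· ≠ ·) ∧
      (cayley T).Adj u (u * swap s p) ∧
      (cayley T).Adj (u * swap s p) (u * swap s p * swap p t) ∧
      (cayley T).Adj (u * swap s p * swap p t) (u * swap s t) ∧
      (cayley T).Adj (u * swap s t) u := by
  have hs := (transGraph_adj.mp hsp).1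
  have hp := (transGraph_adj.mp hpt).1
  have ht := (transGraph_adj.mp hst).1
  have conj : u * swap s p * swap p t * swap s p = u * swap s t := by
    rw [mul_assoc, mul_assoc, ← mul_assoc (swap s p), swap_comm s p, swap_comm p t,
      swap_mul_swap_mul_swap hp.symm ht.symm]
  refine ⟨pairwise_ne_swap_square hs hp ht u, cayley_adj_mul_swap hsp u,
    cayley_adj_mul_swap hpt _, ?_, (cayley_adj_mul_swap hst u).symm⟩
  exact conj ▸ cayley_adj_mul_swap hsp _

end Cayley

theorem stmt12_general (n k : ℕ) (hk : 2 ≤ k)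
    (T : Set (Equiv.Perm (Fin n))) (hT : ∀ t ∈ T, Equiv.Perm.IsSwap t)
    (hkt : IsKTree k (transGraph T)) :
    (cayley T).girth = 4 ∧
    ∀ s p t : Fin n,
      (transGraph T).Adj s p → (transGraph T).Adj p t → (transGraph T).Adj s t →
      ∀ u : Equiv.Perm (Fin n),
        [u, u * Equiv.swap s p, u * Equiv.swap s p * Equiv.swap p t,
          u * Equiv.swap s t].Pairwise (· ≠ ·) ∧
        (cayley T).Adj u (u * Equiv.swap s p) ∧
        (cayley T).Adj (u * Equiv.swap s p) (u * Equiv.swap s p * Equiv.swap p t) ∧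
        (cayley T).Adj (u * Equiv.swap s p * Equiv.swap p t) (u * Equiv.swap s t) ∧
        (cayley T).Adj (u * Equiv.swap s t) u := by
  refine ⟨?_, fun _ _ _ => cayley_typeB_cycle⟩
  obtain ⟨s, p, t, hsp, hpt, hst⟩ := hkt.exists_triangle hk
  obtain ⟨hne, h₁, h₂, h₃, h₄⟩ := cayley_typeB_cycle hsp hpt hst 1
  simp only [List.pairwise_cons, List.mem_cons, List.not_mem_nil, or_false, forall_eq_or_imp,
    forall_eq] at hne
  exact (cayley_isBipartite hT).girth_eq_four h₁ h₂ h₃ h₄ hne.1.2.1 hne.2.1.2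

/-- For `n ≥ k+1` and `k ≥ 2`, the girth of `T_kG_n` equals `4`; moreover, every
triangle `s p t` of `G(𝒯)` gives, for each vertex `u`, a (Type B) 4-cycle on the four
distinct vertices `u, u(sp), u(sp)(pt), u(st)`. -/
theorem stmt12 (n k : ℕ) (hk : 2 ≤ k) (hkn : k + 1 ≤ n)
    (T : Set (Equiv.Perm (Fin n))) (hT : ∀ t ∈ T, Equiv.Perm.IsSwap t)
    (hkt : IsKTree k (transGraph T)) :
    (cayley T).girth = 4 ∧
    ∀ s p t : Fin n,
      (transGraph T).Adj s p → (transGraph T).Adj p t → (transGraph T).Adj s t →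
      ∀ u : Equiv.Perm (Fin n),
        [u, u * Equiv.swap s p, u * Equiv.swap s p * Equiv.swap p t,
          u * Equiv.swap s t].Pairwise (· ≠ ·) ∧
        (cayley T).Adj u (u * Equiv.swap s p) ∧
        (cayley T).Adj (u * Equiv.swap s p) (u * Equiv.swap s p * Equiv.swap p t) ∧
        (cayley T).Adj (u * Equiv.swap s p * Equiv.swap p t) (u * Equiv.swap s t) ∧
        (cayley T).Adj (u * Equiv.swap s t) u :=
  stmt12_general n k hk T hT hkt
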